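/- arXiv:1306.1320 — 5 statements merged into one kernel-verified Lean document; each statement's English description precedes it below -/
import Mathlib

section
/- (Sufficiency direction of the vector-valued Kolmogorov criterion.) Let X be a compact space, V a linear subspace of C(X, ℝ^d), f ∈ C(X, ℝ^d), u ∈ V, ε := f − u, and let A := {x ∈ X : |ε(x)| = ‖ε‖} be the set of extreme points of ε. If for every v ∈ V one has min_{x ∈ A} ⟨ε(x), v(x)⟩ ≤ 0 (where ⟨·,·⟩ is the weighted inner product), then u is a best approximation to f from V, i.e., ‖f − u‖ ≤ ‖f − v‖ for all v ∈ V. -/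
/-- sufficiency direction of the vector-valued Kolmogorov criterion. -/
theorem stmt_1 {X : Type*} [TopologicalSpace X] [CompactSpace X] [Nonempty X]
    {d : ℕ} (p : Fin d → ℝ) (hp : ∀ l, 0 < p l)
    (V : Submodule ℝ C(X, Fin d → ℝ)) (f : C(X, Fin d → ℝ)) (u : C(X, Fin d → ℝ))
    (hu : u ∈ V)
    (ip : (Fin d → ℝ) → (Fin d → ℝ) → ℝ)
    (hip : ip = fun r s => ∑ l, p l * r l * s l)
    (nrm : (Fin d → ℝ) → ℝ) (hnrm : nrm = fun r => Real.sqrt (ip r r))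
    (N : C(X, Fin d → ℝ) → ℝ) (hN : N = fun g => ⨆ x : X, nrm (g x))
    (ε : C(X, Fin d → ℝ)) (hε : ε = f - u)
    (A : Set X) (hA : A = {x : X | nrm (ε x) = N ε})
    (hKol : ∀ v ∈ V, ∃ x ∈ A, ip (ε x) (v x) ≤ 0) :
    ∀ v ∈ V, N (f - u) ≤ N (f - v) := by
  subst hip hnrm hN hε hA
  intro v hv
  obtain ⟨x, hxA, hxip⟩ := hKol (v - u) (V.sub_mem hv hu)
  have hcont : ∀ h : C(X, Fin d → ℝ),
      Continuous fun y : X => Real.sqrt (∑ l, p l * h y l * h y l) := by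
    intro h
    apply Real.continuous_sqrt.comp
    apply continuous_finset_sum
    intro l _
    exact (continuous_const.mul ((continuous_apply l).comp h.continuous)).mul
      ((continuous_apply l).comp h.continuous)
  have hbdd : BddAbove (Set.range fun y : X =>
      Real.sqrt (∑ l, p l * (f - v) y l * (f - v) y l)) :=
    (isCompact_range (hcont (f - v))).bddAbove
  -- key pointwise inequality at x
  have key : ∑ l, p l * (f - u) x l * (f - u) x l ≤
      ∑ l, p l * (f - v) x l * (f - v) x l := by
    have hdiff : ∑ l, p l * (f - v) x l * (f - v) x l
        - ∑ l, p l * (f - u) x l * (f - u) x l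
        = ∑ l, (p l * (v - u) x l * (v - u) x l)
          - 2 * ∑ l, (p l * (f - u) x l * (v - u) x l) := by
      rw [Finset.mul_sum, ← Finset.sum_sub_distrib, ← Finset.sum_sub_distrib]
      apply Finset.sum_congr rfl
      intro l _
      simp only [ContinuousMap.sub_apply, Pi.sub_apply]
      ring
    have hnn : 0 ≤ ∑ l, p l * (v - u) x l * (v - u) x l :=
      Finset.sum_nonneg fun l _ => by nlinarith [(hp l).le, sq_nonneg ((v - u) x l)]
    linarith
  have step1 : Real.sqrt (∑ l, p l * (f - u) x l * (f - u) x l) ≤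
      Real.sqrt (∑ l, p l * (f - v) x l * (f - v) x l) :=
    Real.sqrt_le_sqrt key
  calc (⨆ y : X, Real.sqrt (∑ l, p l * (f - u) y l * (f - u) y l))
      = Real.sqrt (∑ l, p l * (f - u) x l * (f - u) x l) := hxA.symm
    _ ≤ Real.sqrt (∑ l, p l * (f - v) x l * (f - v) x l) := step1
    _ ≤ ⨆ y : X, Real.sqrt (∑ l, p l * (f - v) y l * (f - v) y l) := le_ciSup hbdd x
end

section
/- (Necessity direction of the vector-valued Kolmogorov criterion.) With the setup as in the sufficiency direction, if u ∈ V is a best approximation to f from V and ‖f − u‖ > 0, then for every v ∈ V there exists x ∈ A = {x : |ε(x)| = ‖ε‖} with ⟨ε(x), v(x)⟩ ≤ 0. -/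
private lemma exists_max_cont {X : Type*} [TopologicalSpace X] [CompactSpace X] [Nonempty X]
    (g : X → ℝ) (hg : Continuous g) : ∃ x₀ : X, ∀ x, g x ≤ g x₀ := by
  obtain ⟨x₀, -, h⟩ := isCompact_univ.exists_isMaxOn Set.univ_nonempty hg.continuousOn
  exact ⟨x₀, fun x => h (Set.mem_univ x)⟩

private lemma ciSup_eq_max {X : Type*} [Nonempty X] (g : X → ℝ) (x₀ : X)
    (h : ∀ x, g x ≤ g x₀) : (⨆ x, g x) = g x₀ :=
  le_antisymm (ciSup_le h) (le_ciSup ⟨g x₀, by rintro y ⟨x, rfl⟩; exact h x⟩ x₀)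

set_option maxHeartbeats 1000000 in
/-- necessity direction of the vector-valued Kolmogorov criterion. -/
theorem stmt_2 {X : Type*} [MetricSpace X] [CompactSpace X] [Nonempty X]
    {d : ℕ} (p : Fin d → ℝ) (hp : ∀ l, 0 < p l)
    (V : Submodule ℝ C(X, Fin d → ℝ)) (hV : FiniteDimensional ℝ V)
    (f : C(X, Fin d → ℝ)) (u : C(X, Fin d → ℝ)) (hu : u ∈ V)
    (ip : (Fin d → ℝ) → (Fin d → ℝ) → ℝ)
    (hip : ip = fun r s => ∑ l, p l * r l * s l)
    (nrm : (Fin d → ℝ) → ℝ) (hnrm : nrm = fun r => Real.sqrt (ip r r))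
    (N : C(X, Fin d → ℝ) → ℝ) (hN : N = fun g => ⨆ x : X, nrm (g x))
    (ε : C(X, Fin d → ℝ)) (hε : ε = f - u)
    (hbest : ∀ v ∈ V, N (f - u) ≤ N (f - v))
    (hpos : 0 < N ε) :
    ∀ v ∈ V, ∃ x : X, nrm (ε x) = N ε ∧ ip (ε x) (v x) ≤ 0 := by
  -- basic lemmas about ip, nrm, N
  have ip_def : ∀ r s, ip r s = ∑ l, p l * r l * s l := by simp [hip]
  have ipnn : ∀ r : Fin d → ℝ, 0 ≤ ip r r := by
    intro r
    rw [ip_def]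
    refine Finset.sum_nonneg fun l _ => ?_
    have := mul_self_nonneg (r l)
    nlinarith [(hp l).le]
  have nrm_def : ∀ r, nrm r = Real.sqrt (ip r r) := by simp [hnrm]
  have nrm_nonneg : ∀ r, 0 ≤ nrm r := fun r => by rw [nrm_def]; exact Real.sqrt_nonneg _
  have nrm_sq : ∀ r, nrm r ^ 2 = ip r r := fun r => by
    rw [nrm_def]; exact Real.sq_sqrt (ipnn r)
  have ip_expand : ∀ (a b : Fin d → ℝ) (t : ℝ),
      ip (a - t • b) (a - t • b) = ip a a - 2 * t * ip a b + t ^ 2 * ip b b := by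
    intro a b t
    simp only [ip_def, Pi.sub_apply, Pi.smul_apply, smul_eq_mul, Finset.mul_sum,
      ← Finset.sum_sub_distrib, ← Finset.sum_add_distrib]
    exact Finset.sum_congr rfl fun l _ => by ring
  have ip_cont : ∀ w z : C(X, Fin d → ℝ), Continuous fun x => ip (w x) (z x) := by
    intro w z
    simp only [ip_def]
    refine continuous_finset_sum _ fun l _ => ?_
    exact (continuous_const.mul ((continuous_apply l).comp w.continuous)).mul
      ((continuous_apply l).comp z.continuous)
  have nrm_cont : ∀ w : C(X, Fin d → ℝ), Continuous fun x => nrm (w x) := by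
    intro w
    simp only [nrm_def]
    exact Real.continuous_sqrt.comp (ip_cont w w)
  have N_def : ∀ w : C(X, Fin d → ℝ), N w = ⨆ x, nrm (w x) := by simp [hN]
  intro v hv
  by_contra hcon
  push_neg at hcon
  set M := N ε with hM
  -- attainment of the sup defining M
  obtain ⟨x₀, hx₀⟩ := exists_max_cont _ (nrm_cont ε)
  have hMx₀ : nrm (ε x₀) = M := by
    rw [hM, N_def, ciSup_eq_max _ x₀ hx₀]
  have hle : ∀ x, nrm (ε x) ≤ M := fun x => (hx₀ x).trans hMx₀.le
  -- δ : minimum of φ on the (compact, nonempty) critical set A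
  have hA_closed : IsClosed {x : X | nrm (ε x) = M} := isClosed_eq (nrm_cont ε) continuous_const
  obtain ⟨xδ, hxδA, hxδmin⟩ :=
    hA_closed.isCompact.exists_isMinOn ⟨x₀, hMx₀⟩ ((ip_cont ε v).continuousOn)
  set δ := ip (ε xδ) (v xδ) with hδ
  have hδpos : 0 < δ := hcon xδ hxδA
  have hδle : ∀ x, nrm (ε x) = M → δ ≤ ip (ε x) (v x) := fun x hx => hxδmin hx
  -- B and m
  set B : Set X := {x | ip (ε x) (v x) ≤ δ / 2} with hB
  have hB_closed : IsClosed B := isClosed_le (ip_cont ε v) continuous_const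
  set m := sSup ((fun x => nrm (ε x)) '' B) with hm
  have hBbdd : BddAbove ((fun x => nrm (ε x)) '' B) :=
    ⟨M, by rintro y ⟨x, hx, rfl⟩; exact hle x⟩
  have hmem : ∀ x ∈ B, nrm (ε x) ≤ m := fun x hx => le_csSup hBbdd ⟨x, hx, rfl⟩
  have hmfacts : 0 ≤ m ∧ m < M := by
    rcases Set.eq_empty_or_nonempty B with hBe | hBe
    · rw [hm, hBe, Set.image_empty, Real.sSup_empty]
      exact ⟨le_refl 0, hpos⟩
    · have hcpt : IsCompact ((fun x => nrm (ε x)) '' B) :=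
        (hB_closed.isCompact).image (nrm_cont ε)
      have hmm := hcpt.sSup_mem (hBe.image _)
      rw [← hm] at hmm
      obtain ⟨x1, hx1B, hx1⟩ := hmm
      constructor
      · rw [← hx1]; exact nrm_nonneg _
      · rcases lt_or_eq_of_le ((hx1.symm.trans_le (hle x1)) : m ≤ M) with h | h
        · exact h
        · exfalso
          have hx1A : nrm (ε x1) = M := by simpa using hx1.trans h
          have := hδle x1 hx1A
          have hx1B' : ip (ε x1) (v x1) ≤ δ / 2 := hx1B
          linarith
  obtain ⟨hm0, hmM⟩ := hmfacts
  -- C : bound on nrm (v x), D : bound on |ip (ε x) (v x)|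
  obtain ⟨xC, hxC⟩ := exists_max_cont _ (nrm_cont v)
  set C := nrm (v xC) with hC
  have hC0 : 0 ≤ C := nrm_nonneg _
  have hCle : ∀ x, nrm (v x) ≤ C := hxC
  obtain ⟨xD, hxD⟩ := exists_max_cont (fun x => |ip (ε x) (v x)|) ((ip_cont ε v).abs)
  set D := |ip (ε xD) (v xD)| with hD
  have hD0 : 0 ≤ D := abs_nonneg _
  have hDle : ∀ x, |ip (ε x) (v x)| ≤ D := hxD
  -- choice of t
  have hMpos : 0 < M := hpos
  have hMm : 0 < M ^ 2 - m ^ 2 := by nlinarith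
  set t := min 1 (min (δ / (2 * (C ^ 2 + 1))) ((M ^ 2 - m ^ 2) / (2 * (2 * D + C ^ 2 + 1))))
    with htdef
  have ht0 : 0 < t :=
    lt_min (by norm_num)
      (lt_min (div_pos hδpos (by positivity)) (div_pos hMm (by positivity)))
  have ht1 : t ≤ 1 := min_le_left _ _
  have htle : t ≤ min (δ / (2 * (C ^ 2 + 1))) ((M ^ 2 - m ^ 2) / (2 * (2 * D + C ^ 2 + 1))) :=
    min_le_right _ _
  have ht2 : t * (2 * (C ^ 2 + 1)) ≤ δ :=
    (le_div_iff₀ (by positivity)).mp (htle.trans (min_le_left _ _))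
  have ht3 : t * (2 * (2 * D + C ^ 2 + 1)) ≤ M ^ 2 - m ^ 2 :=
    (le_div_iff₀ (by positivity)).mp (htle.trans (min_le_right _ _))
  clear_value M δ m C D t
  -- key pointwise estimate
  have key : ∀ x, ip (ε x - t • v x) (ε x - t • v x) < M ^ 2 := by
    intro x
    rw [ip_expand]
    have h1 : ip (ε x) (ε x) ≤ M ^ 2 := by
      rw [← nrm_sq]; exact pow_le_pow_left₀ (nrm_nonneg _) (hle x) 2
    have h2 : ip (v x) (v x) ≤ C ^ 2 := by
      rw [← nrm_sq]; exact pow_le_pow_left₀ (nrm_nonneg _) (hCle x) 2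
    have h2' : 0 ≤ ip (v x) (v x) := ipnn _
    by_cases hx : ip (ε x) (v x) ≤ δ / 2
    · -- x ∈ B
      have hεm : ip (ε x) (ε x) ≤ m ^ 2 := by
        rw [← nrm_sq]; exact pow_le_pow_left₀ (nrm_nonneg _) (hmem x hx) 2
      have habs : -D ≤ ip (ε x) (v x) := (abs_le.mp (hDle x)).1
      have htt : t ^ 2 ≤ t := by nlinarith
      nlinarith [mul_le_mul_of_nonneg_left habs ht0.le,
        mul_le_mul_of_nonneg_left h2 (sq_nonneg t),
        mul_le_mul_of_nonneg_right htt hC0, sq_nonneg C, ht0.le]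
    · have hx' : δ / 2 < ip (ε x) (v x) := lt_of_not_ge hx
      nlinarith [mul_le_mul_of_nonneg_left ht2 ht0.le,
        mul_le_mul_of_nonneg_left h2 (sq_nonneg t),
        (mul_lt_mul_iff_right₀ ht0).2 hx', sq_nonneg t, ht0.le]
  -- contradiction with best approximation
  set w : C(X, Fin d → ℝ) := u + t • v with hw
  have hwV : w ∈ V := V.add_mem hu (V.smul_mem t hv)
  have hfw : ∀ x, (f - w) x = ε x - t • v x := by
    intro x
    simp [hw, hε, sub_add_eq_sub_sub]
  have keynrm : ∀ x, nrm ((f - w) x) < M := by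
    intro x
    rw [hfw, nrm_def]
    exact (Real.sqrt_lt' hMpos).mpr (key x)
  have hNfw : N (f - w) < M := by
    rw [N_def]
    obtain ⟨x₂, hx₂⟩ := exists_max_cont _ (nrm_cont (f - w))
    rw [ciSup_eq_max _ x₂ hx₂]
    exact keynrm x₂
  have hge : M ≤ N (f - w) := by
    rw [hM, hε]
    exact hbest w hwV
  linarith
end

section
/- If the system of strict inequalities Σ_{m=1}^n α_m r_m(x) > 0 for all x ∈ A has no solution α ∈ ℝ^n, where A is a compact set and r : A → ℝ^n is continuous, then the origin of ℝ^n lies in the convex hull of the set {r(x) : x ∈ A}. -/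
/-!
If `0` is not in the convex hull of the compact set `r(A)`, it can be strictly separated from that
hull, which is compact (hence closed) by Carathéodory's theorem. The separating functional is
`x ↦ ⟨α, x⟩` for some `α`, and it is positive on `r(A)`.
-/

open Set

section

variable {E : Type*} [AddCommGroup E] [Module ℝ E]

theorem convexHull_eq_iUnion_image_stdSimplex [FiniteDimensional ℝ E] (s : Set E) :
    convexHull ℝ s = ⋃ k : Fin (Module.finrank ℝ E + 2),
      (fun p : (Fin k → ℝ) × (Fin k → E) => ∑ i, p.1 i • p.2 i) ''
        (stdSimplex ℝ (Fin k) ×ˢ univ.pi fun _ => s) := by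
  refine Subset.antisymm (fun x hx => ?_) (iUnion_subset fun k => ?_)
  · obtain ⟨ι, _, z, w, hzs, hindep, hwpos, hw1, rfl⟩ := eq_pos_convex_span_of_mem_convexHull hx
    have hcard : Fintype.card ι < Module.finrank ℝ E + 2 := by
      have := hindep.card_le_finrank_succ
      have := Submodule.finrank_le (vectorSpan ℝ (range z))
      omega
    let e := (Fintype.equivFin ι).symm
    refine mem_iUnion.2 ⟨⟨_, hcard⟩, ⟨w ∘ e, z ∘ e⟩,
      ⟨⟨fun i => (hwpos _).le, ?_⟩, fun i _ => hzs ⟨_, rfl⟩⟩, ?_⟩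
    · simpa [e, Equiv.sum_comp] using hw1
    · exact e.sum_comp fun i => w i • z i
  · rintro _ ⟨⟨w, z⟩, ⟨⟨hw0, hw1⟩, hz⟩, rfl⟩
    simpa [Finset.centerMass_eq_of_sum_1 _ _ hw1] using
      Finset.centerMass_mem_convexHull Finset.univ (fun i _ => hw0 i) (by simp [hw1])
        fun i _ => hz i trivial

theorem IsCompact.convexHull [TopologicalSpace E] [ContinuousAdd E] [ContinuousSMul ℝ E]
    [FiniteDimensional ℝ E] {s : Set E} (hs : IsCompact s) : IsCompact (convexHull ℝ s) := by
  rw [convexHull_eq_iUnion_image_stdSimplex]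
  exact isCompact_iUnion fun k =>
    ((isCompact_stdSimplex ℝ _).prod (isCompact_univ_pi fun _ => hs)).image (by fun_prop)

theorem exists_forall_pos_of_zero_notMem_convexHull [TopologicalSpace E] [T2Space E]
    [IsTopologicalAddGroup E] [ContinuousSMul ℝ E] [LocallyConvexSpace ℝ E]
    [FiniteDimensional ℝ E] {s : Set E} (hs : IsCompact s) (h0 : (0 : E) ∉ convexHull ℝ s) :
    ∃ f : StrongDual ℝ E, ∀ x ∈ s, 0 < f x := by
  obtain ⟨f, u, hf0, hf⟩ :=
    geometric_hahn_banach_point_closed (convex_convexHull ℝ s) hs.convexHull.isClosed h0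
  rw [map_zero] at hf0
  exact ⟨f, fun x hx => hf0.trans (hf x (subset_convexHull ℝ s hx))⟩

end

theorem StrongDual.pi_apply_eq_sum {ι : Type*} [Fintype ι] [DecidableEq ι]
    (f : StrongDual ℝ (ι → ℝ)) (x : ι → ℝ) : f x = ∑ m, f (Pi.single m 1) * x m := by
  conv_lhs => rw [← Finset.univ_sum_single x, map_sum]
  refine Finset.sum_congr rfl fun m _ => ?_
  rw [← mul_one (x m), ← smul_eq_mul, Pi.single_smul', map_smul, smul_eq_mul, mul_comm,
    smul_eq_mul, mul_one]

theorem stmt_3_general {A : Type*} [TopologicalSpace A] [CompactSpace A]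
    {n : ℕ} (r : A → (Fin n → ℝ)) (hr : Continuous r)
    (h : ¬ ∃ α : Fin n → ℝ, ∀ x : A, 0 < ∑ m, α m * r x m) :
    (0 : Fin n → ℝ) ∈ convexHull ℝ (Set.range r) := by
  by_contra h0
  obtain ⟨f, hf⟩ := exists_forall_pos_of_zero_notMem_convexHull (isCompact_range hr) h0
  refine h ⟨fun m => f (Pi.single m 1), fun x => ?_⟩
  rw [← StrongDual.pi_apply_eq_sum]
  exact hf (r x) ⟨x, rfl⟩

/-- if the system `⟨α, r(x)⟩ > 0` for all `x ∈ A` is unsolvable,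
then `0` lies in the convex hull of `{r(x) : x ∈ A}`. -/
theorem stmt_3 {A : Type*} [TopologicalSpace A] [CompactSpace A] [Nonempty A]
    {n : ℕ} (r : A → (Fin n → ℝ)) (hr : Continuous r)
    (h : ¬ ∃ α : Fin n → ℝ, ∀ x : A, 0 < ∑ m, α m * r x m) :
    (0 : Fin n → ℝ) ∈ convexHull ℝ (Set.range r) :=
  stmt_3_general r hr h
end

section
/- (Characterization theorem, direction (iii) ⇒ (i).) Let X be compact, V a linear subspace of C(X, ℝ^d) with the weighted sup-norm setup, f ∈ C(X, ℝ^d), u ∈ V, ε = f − u with ‖ε‖ > 0. Suppose there exist points x_1,…,x_ν ∈ X with |ε(x_i)| = ‖ε‖, and weights w_i ≥ 0 with Σ w_i = 1, such that the linear functional ℓ(g) := (1/‖ε‖) Σ_i w_i ⟨ε(x_i), g(x_i)⟩ satisfies ℓ(v) = 0 for all v ∈ V. Then u is a best approximation to f from V. -/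
lemma aux_cs {d : ℕ} (p : Fin d → ℝ) (hp : ∀ l, 0 < p l) (r s : Fin d → ℝ) :
    (∑ l, p l * r l * s l) ≤
      Real.sqrt (∑ l, p l * r l * r l) * Real.sqrt (∑ l, p l * s l * s l) := by
  have key : (∑ l, (Real.sqrt (p l) * r l) * (Real.sqrt (p l) * s l)) ^ 2 ≤
      (∑ l, (Real.sqrt (p l) * r l) ^ 2) * (∑ l, (Real.sqrt (p l) * s l) ^ 2) :=
    Finset.sum_mul_sq_le_sq_mul_sq Finset.univ _ _
  have hrw : ∀ a b : Fin d → ℝ, (∑ l, (Real.sqrt (p l) * a l) * (Real.sqrt (p l) * b l))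
      = ∑ l, p l * a l * b l := by
    intro a b
    refine Finset.sum_congr rfl fun l _ => ?_
    have h : Real.sqrt (p l) * Real.sqrt (p l) = p l := Real.mul_self_sqrt (hp l).le
    rw [show Real.sqrt (p l) * a l * (Real.sqrt (p l) * b l)
        = (Real.sqrt (p l) * Real.sqrt (p l)) * (a l * b l) from by ring, h]
    ring
  have hrw2 : ∀ a : Fin d → ℝ, (∑ l, (Real.sqrt (p l) * a l) ^ 2) = ∑ l, p l * a l * a l := by
    intro a
    rw [← hrw a a]
    exact Finset.sum_congr rfl fun l _ => by ring
  rw [hrw, hrw2, hrw2] at key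
  have h1 : 0 ≤ ∑ l, p l * r l * r l := by
    apply Finset.sum_nonneg; intro l _; nlinarith [(hp l).le, sq_nonneg (r l)]
  have h2 : 0 ≤ ∑ l, p l * s l * s l := by
    apply Finset.sum_nonneg; intro l _; nlinarith [(hp l).le, sq_nonneg (s l)]
  calc (∑ l, p l * r l * s l) ≤ |∑ l, p l * r l * s l| := le_abs_self _
    _ = Real.sqrt ((∑ l, p l * r l * s l) ^ 2) := (Real.sqrt_sq_eq_abs _).symm
    _ ≤ Real.sqrt ((∑ l, p l * r l * r l) * ∑ l, p l * s l * s l) :=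
        Real.sqrt_le_sqrt key
    _ = _ := Real.sqrt_mul h1 _

/-- characterization theorem, direction (iii) ⇒ (i). -/
theorem stmt_5 {X : Type*} [TopologicalSpace X] [CompactSpace X] [Nonempty X]
    {d : ℕ} (p : Fin d → ℝ) (hp : ∀ l, 0 < p l)
    (V : Submodule ℝ C(X, Fin d → ℝ)) (f : C(X, Fin d → ℝ)) (u : C(X, Fin d → ℝ))
    (hu : u ∈ V)
    (ip : (Fin d → ℝ) → (Fin d → ℝ) → ℝ)
    (hip : ip = fun r s => ∑ l, p l * r l * s l)
    (nrm : (Fin d → ℝ) → ℝ) (hnrm : nrm = fun r => Real.sqrt (ip r r))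
    (N : C(X, Fin d → ℝ) → ℝ) (hN : N = fun g => ⨆ x : X, nrm (g x))
    (ε : C(X, Fin d → ℝ)) (hε : ε = f - u) (hpos : 0 < N ε)
    (ν : ℕ) (x : Fin ν → X) (w : Fin ν → ℝ)
    (hx : ∀ i, nrm (ε (x i)) = N ε)
    (hw : ∀ i, 0 ≤ w i) (hw1 : ∑ i, w i = 1)
    (ℓ : C(X, Fin d → ℝ) → ℝ)
    (hℓ : ℓ = fun g => (1 / N ε) * ∑ i, w i * ip (ε (x i)) (g (x i)))
    (hker : ∀ v ∈ V, ℓ v = 0) :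
    ∀ v ∈ V, N (f - u) ≤ N (f - v) := by
  intro v hv
  -- Cauchy-Schwarz for ip
  have hcs : ∀ r s, ip r s ≤ nrm r * nrm s := by
    intro r s
    subst hip hnrm
    simpa using aux_cs p hp r s

  have hnrm_nonneg : ∀ r, 0 ≤ nrm r := by
    intro r; rw [hnrm]; exact Real.sqrt_nonneg _
  -- ip r r = (nrm r)^2
  have hiprr : ∀ r, ip r r = (nrm r) ^ 2 := by
    intro r
    rw [hnrm]
    have : 0 ≤ ip r r := by
      rw [hip]
      apply Finset.sum_nonneg
      intro l _
      nlinarith [(hp l).le, sq_nonneg (r l)]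
    simp [Real.sq_sqrt this]
  -- continuity and boundedness of nrm ∘ g
  have hcont : ∀ g : C(X, Fin d → ℝ), Continuous fun y => nrm (g y) := by
    intro g
    rw [hnrm, hip]
    apply Real.continuous_sqrt.comp
    apply continuous_finset_sum
    intro l _
    exact (continuous_const.mul ((continuous_apply l).comp g.continuous)).mul
      ((continuous_apply l).comp g.continuous)
  have hle : ∀ (g : C(X, Fin d → ℝ)) (y : X), nrm (g y) ≤ N g := by
    intro g y
    rw [hN]
    exact le_ciSup (isCompact_range (hcont g)).bddAbove y
  -- ε = f - u, so N (f - u) = N ε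
  have hNe : N (f - u) = N ε := by rw [hε]
  rw [hNe]
  -- compute ℓ (f - v)
  have hsplit : (f - v : C(X, Fin d → ℝ)) = ε + (u - v) := by rw [hε]; abel
  have hℓfv : ℓ (f - v) = N ε := by
    have huv : (u - v : C(X, Fin d → ℝ)) ∈ V := V.sub_mem hu hv
    have h0 := hker _ huv
    rw [hℓ] at h0 ⊢
    simp only at h0 ⊢
    have hterm : ∀ i, ip (ε (x i)) ((f - v) (x i))
        = ip (ε (x i)) (ε (x i)) + ip (ε (x i)) ((u - v) (x i)) := by
      intro i
      rw [hsplit, hip]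
      simp only [ContinuousMap.add_apply]
      rw [← Finset.sum_add_distrib]
      refine Finset.sum_congr rfl fun l _ => ?_
      simp [Pi.add_apply]
      ring
    calc (1 / N ε) * ∑ i, w i * ip (ε (x i)) ((f - v) (x i))
        = (1 / N ε) * ∑ i, (w i * ip (ε (x i)) (ε (x i))
            + w i * ip (ε (x i)) ((u - v) (x i))) := by
          congr 1; refine Finset.sum_congr rfl fun i _ => ?_; rw [hterm i]; ring
      _ = (1 / N ε) * ∑ i, w i * ip (ε (x i)) (ε (x i))
            + (1 / N ε) * ∑ i, w i * ip (ε (x i)) ((u - v) (x i)) := by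
          rw [Finset.sum_add_distrib]; ring
      _ = (1 / N ε) * ∑ i, w i * ip (ε (x i)) (ε (x i)) := by rw [h0]; ring
      _ = (1 / N ε) * ∑ i, w i * (N ε) ^ 2 := by
          congr 1; refine Finset.sum_congr rfl fun i _ => ?_
          rw [hiprr, hx i]
      _ = (1 / N ε) * ((N ε) ^ 2 * ∑ i, w i) := by rw [← Finset.sum_mul]; ring
      _ = N ε := by rw [hw1]; field_simp
  -- bound ℓ (f - v) ≤ N (f - v)
  have hbound : ℓ (f - v) ≤ N (f - v) := by
    rw [hℓ]
    simp only
    have hsum : (∑ i, w i * ip (ε (x i)) ((f - v) (x i))) ≤ N ε * N (f - v) := by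
      calc (∑ i, w i * ip (ε (x i)) ((f - v) (x i)))
          ≤ ∑ i, w i * (N ε * N (f - v)) := by
            refine Finset.sum_le_sum fun i _ => ?_
            refine mul_le_mul_of_nonneg_left ?_ (hw i)
            calc ip (ε (x i)) ((f - v) (x i))
                ≤ nrm (ε (x i)) * nrm ((f - v) (x i)) := hcs _ _
              _ ≤ N ε * N (f - v) := by
                  rw [hx i]
                  exact mul_le_mul_of_nonneg_left (hle _ _) hpos.le
        _ = N ε * N (f - v) := by rw [← Finset.sum_mul, hw1]; ring
    calc (1 / N ε) * ∑ i, w i * ip (ε (x i)) ((f - v) (x i))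
        ≤ (1 / N ε) * (N ε * N (f - v)) := by
          apply mul_le_mul_of_nonneg_left hsum
          positivity
      _ = N (f - v) := by field_simp
  linarith [hℓfv ▸ hbound]
end

section
/- (Example 3.4, best approximation claim.) Consider f(x) = (x², x³) on [−1,1] with equal weights p₁ = p₂ = 1/2, approximated by V = {(θ₁, θ₂ x) : θ₁, θ₂ ∈ ℝ}. Then u*(x) = (1/2, x) is a best approximation: for all θ₁, θ₂ ∈ ℝ, sup_{x∈[−1,1]} ½((x² − 1/2)² + (x³ − x)²) ≤ sup_{x∈[−1,1]} ½((x² − θ₁)² + (x³ − θ₂x)²), and the optimal value equals 1/8. -/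
lemma stmt10_bdd (θ₁ θ₂ : ℝ) :
    BddAbove (Set.range fun x : Set.Icc (-1 : ℝ) 1 =>
      (1 / 2) * (((x : ℝ) ^ 2 - θ₁) ^ 2 + ((x : ℝ) ^ 3 - θ₂ * (x : ℝ)) ^ 2)) :=
  (isCompact_range (by fun_prop)).bddAbove

lemma stmt10_val :
    (⨆ x : Set.Icc (-1 : ℝ) 1,
        (1 / 2) * (((x : ℝ) ^ 2 - 1 / 2) ^ 2 + ((x : ℝ) ^ 3 - (x : ℝ)) ^ 2)) = 1 / 8 := by
  haveI : Nonempty (Set.Icc (-1:ℝ) 1) := ⟨⟨0, by norm_num⟩⟩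
  apply le_antisymm
  · apply ciSup_le
    rintro ⟨x, hx1, hx2⟩
    simp only
    have h : 0 ≤ x^4 * (1 - x^2) := mul_nonneg (by positivity) (by nlinarith)
    nlinarith [h]
  · have h := le_ciSup (f := fun x : Set.Icc (-1 : ℝ) 1 =>
      (1 / 2) * (((x : ℝ) ^ 2 - 1 / 2) ^ 2 + ((x : ℝ) ^ 3 - (x : ℝ)) ^ 2))
      (by simpa using stmt10_bdd (1/2) 1) ⟨1, by norm_num, le_refl 1⟩
    norm_num at h ⊢
    linarith

/-- `u*(x) = (1/2, x)` is a best approximation to `f(x) = (x², x³)`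
on `[-1,1]` for the weighted sup-norm with weights `1/2, 1/2`, with optimal value `1/8`. -/
theorem stmt_10 :
    (∀ θ₁ θ₂ : ℝ,
      (⨆ x : Set.Icc (-1 : ℝ) 1,
          (1 / 2) * (((x : ℝ) ^ 2 - 1 / 2) ^ 2 + ((x : ℝ) ^ 3 - (x : ℝ)) ^ 2))
        ≤ ⨆ x : Set.Icc (-1 : ℝ) 1,
          (1 / 2) * (((x : ℝ) ^ 2 - θ₁) ^ 2 + ((x : ℝ) ^ 3 - θ₂ * (x : ℝ)) ^ 2)) ∧
    (⨆ x : Set.Icc (-1 : ℝ) 1,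
        (1 / 2) * (((x : ℝ) ^ 2 - 1 / 2) ^ 2 + ((x : ℝ) ^ 3 - (x : ℝ)) ^ 2)) = 1 / 8 := by
  refine ⟨fun θ₁ θ₂ => ?_, stmt10_val⟩
  rw [stmt10_val]
  have h0 := le_ciSup (stmt10_bdd θ₁ θ₂) ⟨0, by norm_num, by norm_num⟩
  have h1 := le_ciSup (stmt10_bdd θ₁ θ₂) ⟨1, by norm_num, le_refl 1⟩
  simp only at h0 h1
  by_cases hc : (1:ℝ)/4 ≤ θ₁ ^ 2
  · calc (1:ℝ)/8 ≤ (1/2) * ((0^2 - θ₁)^2 + (0^3 - θ₂*0)^2) := by nlinarith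
    _ ≤ _ := by norm_num at h0 ⊢; convert h0 using 2 <;> ring
  · push_neg at hc
    have hθ : θ₁ < 1/2 := by nlinarith [sq_nonneg (θ₁ - 1/2)]
    calc (1:ℝ)/8 ≤ (1/2) * ((1^2 - θ₁)^2 + (1^3 - θ₂*1)^2) := by
          nlinarith [sq_nonneg (1-θ₂), mul_pos (by linarith : (0:ℝ) < 1/2 - θ₁) (by linarith : (0:ℝ) < 3/2 - θ₁)]
    _ ≤ _ := by convert h1 using 3 <;> norm_num
end
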